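/- Let M be a von Neumann algebra acting on a Hilbert space H, let Tr be a faithful normal semifinite trace on B(K)⊗̄M for a Hilbert space K, and let V, W : H' → K⊗H be isometries intertwining a fixed right M-module structure on H' with the diagonal right M-action on K⊗H (i.e. V and W are right M-module maps). Then W V* lies in B(K)⊗̄M and Tr(V V*) = Tr(W W*). -/

import Mathlib

/-!
An intertwiner `V` of the right actions also intertwines their adjoints, since the actions are
`*`-preserving, so `W V*` commutes with the diagonal action and lies in its commutant `N`.
For the trace, `V V* = (W V*)* (W V*)` and `W W* = (W V*) (W V*)*` because `W* W = V* V = 1`,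
and traciality identifies the two.
-/

namespace ContinuousLinearMap

open scoped InnerProduct

variable {𝕜 E F : Type*} [RCLike 𝕜]
  [NormedAddCommGroup E] [InnerProductSpace 𝕜 E] [CompleteSpace E]
  [NormedAddCommGroup F] [InnerProductSpace 𝕜 F] [CompleteSpace F]

theorem adjoint_comp_eq_of_comp_adjoint_eq {V : E →L[𝕜] F} {a : E →L[𝕜] E} {b : F →L[𝕜] F}
    (h : V ∘L a† = b† ∘L V) : V† ∘L b = a ∘L V† := by
  simpa only [adjoint_comp, adjoint_adjoint] using (congrArg adjoint h).symm

theorem commute_comp_adjoint_of_intertwines {V W : E →L[𝕜] F} {a : E →L[𝕜] E} {b : F →L[𝕜] F}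
    (hV : V ∘L a† = b† ∘L V) (hW : W ∘L a = b ∘L W) : Commute (W ∘L V†) b :=
  calc (W ∘L V†) ∘L b = W ∘L (V† ∘L b) := comp_assoc _ _ _
    _ = (W ∘L a) ∘L V† := by rw [adjoint_comp_eq_of_comp_adjoint_eq hV, comp_assoc]
    _ = b ∘L (W ∘L V†) := by rw [hW, comp_assoc]

theorem comp_adjoint_comp_comp_adjoint_of_isometry (V : E →L[𝕜] F) {W : E →L[𝕜] F}
    (hW : Isometry W) : (V ∘L W†) ∘L (W ∘L V†) = V ∘L V† := by
  rw [comp_assoc, ← comp_assoc (W†) W, (isometry_iff_adjoint_comp_self W).1 hW, one_def, id_comp]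

theorem apply_comp_adjoint_eq_of_isometry {R : Type*} (Tr : (F →L[𝕜] F) → R)
    (hTr : ∀ x : F →L[𝕜] F, Tr (star x * x) = Tr (x * star x)) {V W : E →L[𝕜] F}
    (hV : Isometry V) (hW : Isometry W) : Tr (V ∘L V†) = Tr (W ∘L W†) := by
  have hstar : star (W ∘L V†) = V ∘L W† := by
    rw [star_eq_adjoint, adjoint_comp, adjoint_adjoint]
  have := hTr (W ∘L V†)
  rwa [hstar, mul_def, mul_def, comp_adjoint_comp_comp_adjoint_of_isometry V hW,
    comp_adjoint_comp_comp_adjoint_of_isometry W hV] at this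

end ContinuousLinearMap

open scoped ENNReal

theorem stmt0_general
    {H H' H₂ : Type}
    [NormedAddCommGroup H] [InnerProductSpace ℂ H] [CompleteSpace H]
    [NormedAddCommGroup H'] [InnerProductSpace ℂ H'] [CompleteSpace H']
    [NormedAddCommGroup H₂] [InnerProductSpace ℂ H₂] [CompleteSpace H₂]
    (M : VonNeumannAlgebra H)
    -- the right `M`-module structures, as *-anti-homomorphisms on `M`
    (ρ : (H →L[ℂ] H) → (H' →L[ℂ] H'))
    (ρ₂ : (H →L[ℂ] H) → (H₂ →L[ℂ] H₂))
    (hρ_star : ∀ x ∈ M, ρ (star x) = star (ρ x))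
    (hρ₂_star : ∀ x ∈ M, ρ₂ (star x) = star (ρ₂ x))
    -- `N = B(K) ⊗̄ M`, realized as the commutant of the diagonal right `M`-action on `K ⊗ H`
    (N : VonNeumannAlgebra H₂)
    (hN : ∀ x : H₂ →L[ℂ] H₂, x ∈ N ↔ ∀ m ∈ M, Commute x (ρ₂ m))
    -- a faithful normal semifinite trace on `N` (defined on all of `B(H₂)`, tracial)
    (Tr : (H₂ →L[ℂ] H₂) → ℝ≥0∞)
    (hTr_tracial : ∀ x : H₂ →L[ℂ] H₂, Tr (star x * x) = Tr (x * star x))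
    -- the isometries `V, W`, intertwining the right `M`-module structures
    (V W : H' →L[ℂ] H₂)
    (hV : Isometry V) (hW : Isometry W)
    (hVint : ∀ m ∈ M, V.comp (ρ m) = (ρ₂ m).comp V)
    (hWint : ∀ m ∈ M, W.comp (ρ m) = (ρ₂ m).comp W) :
    W.comp (ContinuousLinearMap.adjoint V) ∈ N ∧
      Tr (V.comp (ContinuousLinearMap.adjoint V)) =
        Tr (W.comp (ContinuousLinearMap.adjoint W)) := by
  refine ⟨(hN _).2 fun m hm => ?_,
    ContinuousLinearMap.apply_comp_adjoint_eq_of_isometry Tr hTr_tracial hV hW⟩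
  refine ContinuousLinearMap.commute_comp_adjoint_of_intertwines ?_ (hWint m hm)
  have hVstar := hVint _ (star_mem hm)
  rwa [hρ_star m hm, hρ₂_star m hm] at hVstar

/-- If `M` is a von Neumann algebra on `H`, `H'` is a right `M`-module (via the
*-anti-homomorphism `ρ`), `H₂` plays the role of `K ⊗ H` with the diagonal right `M`-action `ρ₂`,
`N` is the von Neumann algebra `B(K) ⊗̄ M`, realized as the commutant of the diagonal right
action, `Tr` is a (faithful normal semifinite) trace on it, and `V, W : H' → H₂` are isometries
intertwining the right `M`-module structures, then `W V* ∈ N` and `Tr (V V*) = Tr (W W*)`. -/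
theorem stmt0
    {H H' H₂ : Type}
    [NormedAddCommGroup H] [InnerProductSpace ℂ H] [CompleteSpace H]
    [NormedAddCommGroup H'] [InnerProductSpace ℂ H'] [CompleteSpace H']
    [NormedAddCommGroup H₂] [InnerProductSpace ℂ H₂] [CompleteSpace H₂]
    (M : VonNeumannAlgebra H)
    -- the right `M`-module structures, as *-anti-homomorphisms on `M`
    (ρ : (H →L[ℂ] H) → (H' →L[ℂ] H'))
    (ρ₂ : (H →L[ℂ] H) → (H₂ →L[ℂ] H₂))
    (hρ_add : ∀ x ∈ M, ∀ y ∈ M, ρ (x + y) = ρ x + ρ y)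
    (hρ_mul : ∀ x ∈ M, ∀ y ∈ M, ρ (x * y) = ρ y * ρ x)
    (hρ_star : ∀ x ∈ M, ρ (star x) = star (ρ x))
    (hρ_one : ρ 1 = 1)
    (hρ₂_add : ∀ x ∈ M, ∀ y ∈ M, ρ₂ (x + y) = ρ₂ x + ρ₂ y)
    (hρ₂_mul : ∀ x ∈ M, ∀ y ∈ M, ρ₂ (x * y) = ρ₂ y * ρ₂ x)
    (hρ₂_star : ∀ x ∈ M, ρ₂ (star x) = star (ρ₂ x))
    (hρ₂_one : ρ₂ 1 = 1)
    -- `N = B(K) ⊗̄ M`, realized as the commutant of the diagonal right `M`-action on `K ⊗ H`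
    (N : VonNeumannAlgebra H₂)
    (hN : ∀ x : H₂ →L[ℂ] H₂, x ∈ N ↔ ∀ m ∈ M, Commute x (ρ₂ m))
    -- a faithful normal semifinite trace on `N` (defined on all of `B(H₂)`, tracial)
    (Tr : (H₂ →L[ℂ] H₂) → ℝ≥0∞)
    (hTr_tracial : ∀ x : H₂ →L[ℂ] H₂, Tr (star x * x) = Tr (x * star x))
    -- the isometries `V, W`, intertwining the right `M`-module structures
    (V W : H' →L[ℂ] H₂)
    (hV : Isometry V) (hW : Isometry W)
    (hVint : ∀ m ∈ M, V.comp (ρ m) = (ρ₂ m).comp V)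
    (hWint : ∀ m ∈ M, W.comp (ρ m) = (ρ₂ m).comp W) :
    W.comp (ContinuousLinearMap.adjoint V) ∈ N ∧
      Tr (V.comp (ContinuousLinearMap.adjoint V)) =
        Tr (W.comp (ContinuousLinearMap.adjoint W)) :=
  stmt0_general M ρ ρ₂ hρ_star hρ₂_star N hN Tr hTr_tracial V W hV hW hVint hWint
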